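/- Let π be a measure on (0,∞) with ∫ (y ∧ y²) π(dy) < ∞, and for λ ≥ 0 set g(λ) := 2βλ + ∫_{(0,∞)} y(1 - e^{-λy}) π(dy), where β ≥ 0 is a constant. For 0 < β' < 1, the integral ∫_0^1 g(s) s^{-(1+β')} ds is finite if and only if ∫_{(1,∞)} y^{1+β'} π(dy) is finite. -/

import Mathlib

/-!
For `s ∈ (0,1]` we have `g(s) s^{-(1+a)} = 2β s^{-a} + ∫ y (1 - e^{-sy}) s^{-(1+a)} π(dy)`, so
by Tonelli `∫_0^1 g(s) s^{-(1+a)} ds` is a finite drift term plus `∫ K_a(y) π(dy)` with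
`K_a(y) = ∫_0^1 y (1 - e^{-sy}) s^{-(1+a)} ds`. From `1 - e^{-t} ≤ min t 1`, and
`1 - e^{-t} ≥ (1 - e^{-1}) t` on `[0,1]`, splitting the `s`-integral at `s = 1/y` gives
`K_a(y) ≤ y² / (1 - a)` for every `y ≥ 0` and `K_a(y) ≍ y^{1+a}` for `y ≥ 1`. Hence the
jumps `y ≤ 1` contribute finitely because `∫ (y ∧ y²) π(dy) < ∞`, and the contribution of
the jumps `y > 1` is finite exactly when `∫_{(1,∞)} y^{1+a} π(dy)` is.
-/

open MeasureTheory Set Real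
open scoped ENNReal

theorem one_sub_exp_neg_nonneg {t : ℝ} (ht : 0 ≤ t) : 0 ≤ 1 - exp (-t) := by
  linarith [exp_le_one_iff.2 (neg_nonpos.2 ht)]

theorem one_sub_exp_neg_le_self (t : ℝ) : 1 - exp (-t) ≤ t := by
  linarith [one_sub_le_exp_neg t]

theorem one_sub_exp_neg_le_one (t : ℝ) : 1 - exp (-t) ≤ 1 := by
  linarith [exp_pos (-t)]

theorem one_sub_exp_neg_one_mul_le {t : ℝ} (ht0 : 0 ≤ t) (ht1 : t ≤ 1) :
    (1 - exp (-1)) * t ≤ 1 - exp (-t) := by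
  have h := convexOn_exp.2 (mem_univ 0) (mem_univ (-1)) (sub_nonneg.2 ht1) ht0 (by ring)
  simp only [smul_eq_mul, mul_zero, zero_add, mul_neg, mul_one, exp_zero] at h
  linarith

theorem lintegral_Ioc_zero_ofReal_mul_rpow {C r c : ℝ} (hC : 0 ≤ C) (hr : -1 < r)
    (hc : 0 ≤ c) :
    ∫⁻ s in Ioc 0 c, ENNReal.ofReal (C * s ^ r) =
      ENNReal.ofReal (C * (c ^ (r + 1) / (r + 1))) := by
  have hint : IntegrableOn (fun s : ℝ ↦ C * s ^ r) (Ioc 0 c) :=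
    ((intervalIntegral.intervalIntegrable_rpow' hr).const_mul C).1
  rw [← ofReal_integral_eq_lintegral_ofReal hint, integral_const_mul,
    ← intervalIntegral.integral_of_le hc, integral_rpow (Or.inl hr), zero_rpow (by linarith),
    sub_zero]
  filter_upwards [ae_restrict_mem measurableSet_Ioc] with s hs
  exact mul_nonneg hC (rpow_nonneg hs.1.le r)

theorem lintegral_Ioi_ofReal_mul_rpow {C r c : ℝ} (hC : 0 ≤ C) (hr : r < -1) (hc : 0 < c) :
    ∫⁻ s in Ioi c, ENNReal.ofReal (C * s ^ r) =
      ENNReal.ofReal (C * (-c ^ (r + 1) / (r + 1))) := by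
  rw [← ofReal_integral_eq_lintegral_ofReal ((integrableOn_Ioi_rpow_of_lt hr hc).const_mul C),
    integral_const_mul, integral_Ioi_rpow_of_lt hr hc]
  filter_upwards [ae_restrict_mem measurableSet_Ioi] with s hs
  exact mul_nonneg hC (rpow_nonneg (hc.trans hs).le r)

theorem sFinite_of_lintegral_ne_top {α : Type*} [MeasurableSpace α] {μ : Measure α}
    {f : α → ℝ≥0∞} (hf : AEMeasurable f μ) (hf0 : ∀ᵐ x ∂μ, f x ≠ 0)
    (hfin : ∫⁻ x, f x ∂μ ≠ ∞) : SFinite μ :=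
  have : IsFiniteMeasure (μ.withDensity f) := isFiniteMeasure_withDensity hfin
  sFinite_of_absolutelyContinuous (withDensity_absolutelyContinuous' hf hf0)

theorem lintegral_lt_top_iff_of_ae_le_of_ae_le {α : Type*} [MeasurableSpace α]
    {μ : Measure α} {f h : α → ℝ≥0∞} {c C : ℝ≥0∞} (hc : c ≠ 0) (hC : C ≠ ∞)
    (hlow : ∀ᵐ x ∂μ, c * f x ≤ h x) (hup : ∀ᵐ x ∂μ, h x ≤ C * f x) :
    ∫⁻ x, h x ∂μ < ∞ ↔ ∫⁻ x, f x ∂μ < ∞ := by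
  constructor
  · intro hh
    have hcf : c * ∫⁻ x, f x ∂μ ≤ ∫⁻ x, h x ∂μ :=
      (lintegral_const_mul_le c f).trans (lintegral_mono_ae hlow)
    exact ENNReal.lt_top_of_mul_ne_top_right (hcf.trans_lt hh).ne hc
  · intro hf
    refine (lintegral_mono_ae hup).trans_lt ?_
    rw [lintegral_const_mul' _ _ hC]
    exact ENNReal.mul_lt_top hC.lt_top hf

noncomputable def levyIntegrand (a y s : ℝ) : ℝ := y * (1 - exp (-(s * y))) * s ^ (-(1 + a))

/-- `K_a(y)`, the contribution of a jump of size `y` to `∫_0^1 g(s) s^{-(1+a)} ds`. -/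
noncomputable def levyWeight (a y : ℝ) : ℝ≥0∞ :=
  ∫⁻ s in Ioc 0 1, ENNReal.ofReal (levyIntegrand a y s)

section LevyIntegrand

variable {a y s : ℝ}

theorem rpow_neg_one_add_mul_self (hs : 0 < s) : s ^ (-(1 + a)) * s = s ^ (-a) := by
  rw [← rpow_add_one hs.ne']; congr 1; ring

theorem levyIntegrand_nonneg (hs : 0 < s) (hy : 0 ≤ y) : 0 ≤ levyIntegrand a y s :=
  mul_nonneg (mul_nonneg hy (one_sub_exp_neg_nonneg (by positivity))) (rpow_nonneg hs.le _)

theorem levyIntegrand_le_sq_mul_rpow (hs : 0 < s) (hy : 0 ≤ y) :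
    levyIntegrand a y s ≤ y ^ 2 * s ^ (-a) :=
  calc levyIntegrand a y s ≤ y * (s * y) * s ^ (-(1 + a)) := by
        unfold levyIntegrand; gcongr; exact one_sub_exp_neg_le_self _
    _ = (s ^ (-(1 + a)) * s) * y ^ 2 := by ring
    _ = y ^ 2 * s ^ (-a) := by rw [rpow_neg_one_add_mul_self hs, mul_comm]

theorem levyIntegrand_le_mul_rpow (hs : 0 < s) (hy : 0 ≤ y) :
    levyIntegrand a y s ≤ y * s ^ (-(1 + a)) :=
  calc levyIntegrand a y s ≤ y * 1 * s ^ (-(1 + a)) := by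
        unfold levyIntegrand; gcongr; exact one_sub_exp_neg_le_one _
    _ = y * s ^ (-(1 + a)) := by rw [mul_one]

theorem sq_mul_rpow_le_levyIntegrand (hs : 0 < s) (hy : 0 ≤ y) (hsy : s * y ≤ 1) :
    (1 - exp (-1)) * y ^ 2 * s ^ (-a) ≤ levyIntegrand a y s :=
  calc (1 - exp (-1)) * y ^ 2 * s ^ (-a)
        = y * ((1 - exp (-1)) * (s * y)) * s ^ (-(1 + a)) := by
        rw [← rpow_neg_one_add_mul_self hs]; ring
    _ ≤ levyIntegrand a y s := by
        unfold levyIntegrand; gcongr; exact one_sub_exp_neg_one_mul_le (by positivity) hsy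

end LevyIntegrand

section LevyWeight

variable {a y : ℝ}

theorem levyWeight_le_sq (ha1 : a < 1) (hy : 0 ≤ y) :
    levyWeight a y ≤ ENNReal.ofReal (1 / (1 - a)) * ENNReal.ofReal (y ^ 2) :=
  calc levyWeight a y ≤ ∫⁻ s in Ioc 0 1, ENNReal.ofReal (y ^ 2 * s ^ (-a)) :=
        setLIntegral_mono' measurableSet_Ioc fun s hs ↦
          ENNReal.ofReal_le_ofReal (levyIntegrand_le_sq_mul_rpow hs.1 hy)
    _ = ENNReal.ofReal (1 / (1 - a)) * ENNReal.ofReal (y ^ 2) := by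
        rw [lintegral_Ioc_zero_ofReal_mul_rpow (sq_nonneg y) (by linarith) zero_le_one,
          ← ENNReal.ofReal_mul (by rw [one_div_nonneg]; linarith), one_rpow]
        congr 1; ring

theorem lintegral_Ioc_zero_inv_ofReal_sq_mul_rpow (ha1 : a < 1) (hy : 0 < y) :
    ∫⁻ s in Ioc 0 y⁻¹, ENNReal.ofReal (y ^ 2 * s ^ (-a)) =
      ENNReal.ofReal (y ^ (1 + a) / (1 - a)) := by
  rw [lintegral_Ioc_zero_ofReal_mul_rpow (sq_nonneg y) (by linarith) (inv_nonneg.2 hy.le),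
    show -a + 1 = 1 - a by ring, inv_rpow hy.le, ← rpow_neg hy.le, mul_div_assoc',
    ← rpow_natCast, ← rpow_add hy]
  congr 3
  push_cast
  ring

theorem lintegral_Ioi_inv_ofReal_mul_rpow (ha0 : 0 < a) (hy : 0 < y) :
    ∫⁻ s in Ioi y⁻¹, ENNReal.ofReal (y * s ^ (-(1 + a))) =
      ENNReal.ofReal (y ^ (1 + a) / a) := by
  rw [lintegral_Ioi_ofReal_mul_rpow hy.le (by linarith) (inv_pos.2 hy),
    show -(1 + a) + 1 = -a by ring, inv_rpow hy.le, rpow_neg hy.le, inv_inv, neg_div_neg_eq,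
    mul_div_assoc', ← rpow_one_add' hy.le (by linarith : 0 < 1 + a).ne']

theorem levyWeight_le_rpow (ha0 : 0 < a) (ha1 : a < 1) (hy : 0 < y) :
    levyWeight a y ≤ ENNReal.ofReal (1 / (1 - a) + 1 / a) * ENNReal.ofReal (y ^ (1 + a)) := by
  have hsplit : Ioi (0 : ℝ) = Ioc 0 y⁻¹ ∪ Ioi y⁻¹ :=
    (Ioc_union_Ioi_eq_Ioi (by positivity)).symm
  calc levyWeight a y ≤ ∫⁻ s in Ioi 0, ENNReal.ofReal (levyIntegrand a y s) :=
        lintegral_mono_set Ioc_subset_Ioi_self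
    _ ≤ (∫⁻ s in Ioc 0 y⁻¹, ENNReal.ofReal (levyIntegrand a y s)) +
          ∫⁻ s in Ioi y⁻¹, ENNReal.ofReal (levyIntegrand a y s) := by
        rw [hsplit]; exact lintegral_union_le _ _ _
    _ ≤ (∫⁻ s in Ioc 0 y⁻¹, ENNReal.ofReal (y ^ 2 * s ^ (-a))) +
          ∫⁻ s in Ioi y⁻¹, ENNReal.ofReal (y * s ^ (-(1 + a))) := by
        refine add_le_add (setLIntegral_mono' measurableSet_Ioc fun s hs ↦ ?_)
          (setLIntegral_mono' measurableSet_Ioi fun s hs ↦ ?_)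
        · exact ENNReal.ofReal_le_ofReal (levyIntegrand_le_sq_mul_rpow hs.1 hy.le)
        · exact ENNReal.ofReal_le_ofReal
            (levyIntegrand_le_mul_rpow ((inv_pos.2 hy).trans hs) hy.le)
    _ = ENNReal.ofReal (1 / (1 - a) + 1 / a) * ENNReal.ofReal (y ^ (1 + a)) := by
        have hya : 0 ≤ y ^ (1 + a) := rpow_nonneg hy.le _
        rw [lintegral_Ioc_zero_inv_ofReal_sq_mul_rpow ha1 hy,
          lintegral_Ioi_inv_ofReal_mul_rpow ha0 hy,
          ← ENNReal.ofReal_add (div_nonneg hya (by linarith)) (div_nonneg hya ha0.le),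
          ← ENNReal.ofReal_mul (by positivity)]
        congr 1; ring

theorem rpow_le_levyWeight (ha1 : a < 1) (hy : 1 ≤ y) :
    ENNReal.ofReal ((1 - exp (-1)) / (1 - a)) * ENNReal.ofReal (y ^ (1 + a)) ≤
      levyWeight a y := by
  have hy0 : 0 < y := one_pos.trans_le hy
  calc ENNReal.ofReal ((1 - exp (-1)) / (1 - a)) * ENNReal.ofReal (y ^ (1 + a))
      = ENNReal.ofReal (1 - exp (-1)) *
          ∫⁻ s in Ioc 0 y⁻¹, ENNReal.ofReal (y ^ 2 * s ^ (-a)) := by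
        rw [lintegral_Ioc_zero_inv_ofReal_sq_mul_rpow ha1 hy0,
          ← ENNReal.ofReal_mul (one_sub_exp_neg_nonneg zero_le_one),
          ← ENNReal.ofReal_mul (div_nonneg (one_sub_exp_neg_nonneg zero_le_one) (by linarith))]
        congr 1; ring
    _ = ∫⁻ s in Ioc 0 y⁻¹, ENNReal.ofReal ((1 - exp (-1)) * y ^ 2 * s ^ (-a)) := by
        rw [← lintegral_const_mul' _ _ ENNReal.ofReal_ne_top]
        refine setLIntegral_congr_fun measurableSet_Ioc fun s hs ↦ ?_
        rw [← ENNReal.ofReal_mul (one_sub_exp_neg_nonneg zero_le_one), mul_assoc]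
    _ ≤ ∫⁻ s in Ioc 0 y⁻¹, ENNReal.ofReal (levyIntegrand a y s) :=
        setLIntegral_mono' measurableSet_Ioc fun s hs ↦ ENNReal.ofReal_le_ofReal <|
          sq_mul_rpow_le_levyIntegrand hs.1 hy0.le
            (by rw [← le_div_iff₀ hy0, one_div]; exact hs.2)
    _ ≤ levyWeight a y := lintegral_mono_set (Ioc_subset_Ioc_right (inv_le_one_of_one_le₀ hy))

end LevyWeight

section LevyMeasure

variable {pi : Measure ℝ}

theorem integrable_mul_one_sub_exp_neg
    (hpi : ∫⁻ y in Ioi 0, ENNReal.ofReal (min y (y ^ 2)) ∂pi < ⊤) {s : ℝ} (hs0 : 0 ≤ s)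
    (hs1 : s ≤ 1) : Integrable (fun y ↦ y * (1 - exp (-(s * y)))) (pi.restrict (Ioi 0)) := by
  have hmin : Integrable (fun y ↦ min y (y ^ 2)) (pi.restrict (Ioi 0)) := by
    refine (lintegral_ofReal_ne_top_iff_integrable (by fun_prop) ?_).1 hpi.ne
    filter_upwards [ae_restrict_mem measurableSet_Ioi] with y (hy : 0 < y)
    exact le_min hy.le (sq_nonneg y)
  refine hmin.mono' (by fun_prop) ?_
  filter_upwards [ae_restrict_mem measurableSet_Ioi] with y (hy : 0 < y)
  have hsy : 0 ≤ s * y := mul_nonneg hs0 hy.le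
  rw [norm_of_nonneg (mul_nonneg hy.le (one_sub_exp_neg_nonneg hsy))]
  refine le_min ?_ ?_
  · exact mul_le_of_le_one_right hy.le (one_sub_exp_neg_le_one _)
  · calc y * (1 - exp (-(s * y))) ≤ y * (s * y) := by gcongr; exact one_sub_exp_neg_le_self _
      _ ≤ y * (1 * y) := by gcongr
      _ = y ^ 2 := by ring

theorem sFinite_restrict_Ioi_zero
    (hpi : ∫⁻ y in Ioi 0, ENNReal.ofReal (min y (y ^ 2)) ∂pi < ⊤) :
    SFinite (pi.restrict (Ioi 0)) := by
  refine sFinite_of_lintegral_ne_top (by fun_prop) ?_ hpi.ne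
  filter_upwards [ae_restrict_mem measurableSet_Ioi] with y (hy : 0 < y)
  exact (ENNReal.ofReal_pos.2 (lt_min hy (by positivity))).ne'

theorem lintegral_mul_rpow_eq_add_lintegral_levyWeight {β a : ℝ} (hβ : 0 ≤ β)
    (hpi : ∫⁻ y in Ioi 0, ENNReal.ofReal (min y (y ^ 2)) ∂pi < ⊤) {g : ℝ → ℝ}
    (hg : ∀ lam : ℝ, g lam = 2 * β * lam + ∫ y in Ioi 0, y * (1 - exp (-(lam * y))) ∂pi) :
    ∫⁻ s in Ioc 0 1, ENNReal.ofReal (g s * s ^ (-(1 + a))) =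
      (∫⁻ s in Ioc 0 1, ENNReal.ofReal (2 * β * s ^ (-a))) +
        ∫⁻ y in Ioi 0, levyWeight a y ∂pi := by
  have := sFinite_restrict_Ioi_zero hpi
  have hpt : ∀ s ∈ Ioc (0 : ℝ) 1, ENNReal.ofReal (g s * s ^ (-(1 + a))) =
      ENNReal.ofReal (2 * β * s ^ (-a)) +
        ∫⁻ y in Ioi 0, ENNReal.ofReal (levyIntegrand a y s) ∂pi := by
    intro s hs
    have hg' : g s * s ^ (-(1 + a)) =
        2 * β * s ^ (-a) + ∫ y in Ioi 0, levyIntegrand a y s ∂pi := by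
      rw [hg, add_mul, mul_assoc, mul_comm s, rpow_neg_one_add_mul_self hs.1,
        ← integral_mul_const]
      rfl
    have hnonneg : 0 ≤ᵐ[pi.restrict (Ioi 0)] fun y ↦ levyIntegrand a y s := by
      filter_upwards [ae_restrict_mem measurableSet_Ioi] with y (hy : 0 < y)
      exact levyIntegrand_nonneg hs.1 hy.le
    have hint : Integrable (fun y ↦ levyIntegrand a y s) (pi.restrict (Ioi 0)) :=
      (integrable_mul_one_sub_exp_neg hpi hs.1.le hs.2).mul_const _
    rw [hg', ENNReal.ofReal_add (mul_nonneg (mul_nonneg zero_le_two hβ) (rpow_nonneg hs.1.le _))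
        (integral_nonneg_of_ae hnonneg), ofReal_integral_eq_lintegral_ofReal hint hnonneg]
  rw [setLIntegral_congr_fun measurableSet_Ioc hpt, lintegral_add_left (by fun_prop)]
  congr 1
  exact lintegral_lintegral_swap (by unfold levyIntegrand; fun_prop)

theorem lintegral_Ioc_levyWeight_lt_top
    (hpi : ∫⁻ y in Ioi 0, ENNReal.ofReal (min y (y ^ 2)) ∂pi < ⊤) {a : ℝ} (ha1 : a < 1) :
    ∫⁻ y in Ioc 0 1, levyWeight a y ∂pi < ⊤ :=
  calc ∫⁻ y in Ioc 0 1, levyWeight a y ∂pi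
      ≤ ∫⁻ y in Ioc 0 1,
          ENNReal.ofReal (1 / (1 - a)) * ENNReal.ofReal (min y (y ^ 2)) ∂pi :=
        setLIntegral_mono' measurableSet_Ioc fun y hy ↦ by
          rw [min_eq_right (pow_le_of_le_one hy.1.le hy.2 two_ne_zero)]
          exact levyWeight_le_sq ha1 hy.1.le
    _ = ENNReal.ofReal (1 / (1 - a)) * ∫⁻ y in Ioc 0 1, ENNReal.ofReal (min y (y ^ 2)) ∂pi :=
        lintegral_const_mul' _ _ ENNReal.ofReal_ne_top
    _ < ⊤ := ENNReal.mul_lt_top ENNReal.ofReal_lt_top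
        ((lintegral_mono_set Ioc_subset_Ioi_self).trans_lt hpi)

end LevyMeasure

/-- For a measure `π` on `(0,∞)` with `∫ (y ∧ y²) π(dy) < ∞`, `β ≥ 0`, and
`g(λ) := 2βλ + ∫_{(0,∞)} y(1 - e^{-λy}) π(dy)`, and `0 < β' < 1`:
`∫_0^1 g(s) s^{-(1+β')} ds < ∞` if and only if `∫_{(1,∞)} y^{1+β'} π(dy) < ∞`. -/
theorem stmt_17 (pi : Measure ℝ) (β : ℝ) (hβ : 0 ≤ β)
    (hpi : ∫⁻ y in Set.Ioi (0:ℝ), ENNReal.ofReal (min y (y ^ 2)) ∂pi < ⊤)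
    (g : ℝ → ℝ)
    (hg : ∀ lam : ℝ, g lam =
      2 * β * lam + ∫ y in Set.Ioi (0:ℝ), y * (1 - Real.exp (-(lam * y))) ∂pi)
    (β' : ℝ) (hβ'0 : 0 < β') (hβ'1 : β' < 1) :
    (∫⁻ s in Set.Ioc (0:ℝ) 1, ENNReal.ofReal (g s * s ^ (-(1 + β'))) < ⊤)
      ↔ (∫⁻ y in Set.Ioi (1:ℝ), ENNReal.ofReal (y ^ (1 + β')) ∂pi < ⊤) := by
  have hdrift : ∫⁻ s in Ioc 0 1, ENNReal.ofReal (2 * β * s ^ (-β')) < ⊤ := by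
    rw [lintegral_Ioc_zero_ofReal_mul_rpow (mul_nonneg zero_le_two hβ) (by linarith)
      zero_le_one]
    exact ENNReal.ofReal_lt_top
  rw [lintegral_mul_rpow_eq_add_lintegral_levyWeight hβ hpi hg, ENNReal.add_lt_top,
    and_iff_right hdrift, ← Ioc_union_Ioi_eq_Ioi zero_le_one,
    lintegral_union measurableSet_Ioi (Ioc_disjoint_Ioi le_rfl), ENNReal.add_lt_top,
    and_iff_right (lintegral_Ioc_levyWeight_lt_top hpi hβ'1)]
  have hc : ENNReal.ofReal ((1 - exp (-1)) / (1 - β')) ≠ 0 := by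
    refine (ENNReal.ofReal_pos.2 (div_pos ?_ (by linarith))).ne'
    linarith [exp_lt_one_iff.2 neg_one_lt_zero]
  refine lintegral_lt_top_iff_of_ae_le_of_ae_le (C := ENNReal.ofReal (1 / (1 - β') + 1 / β')) hc
    ENNReal.ofReal_ne_top ?_ ?_
  · filter_upwards [ae_restrict_mem measurableSet_Ioi] with y (hy : 1 < y)
    exact rpow_le_levyWeight hβ'1 hy.le
  · filter_upwards [ae_restrict_mem measurableSet_Ioi] with y (hy : 1 < y)
    exact levyWeight_le_rpow hβ'0 hβ'1 (one_pos.trans hy)
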